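/- Let F, C : ℕ × ℕ → ℂ be doubly indexed families of complex numbers related by F(n, m) = Σ_{k=0}^{min(n,m)} C(n-k, m-k) · √([n]_q! [m]_q!) / [k]_q! for all n, m ∈ ℕ (this is the relation between the Fock-space matrix elements F(n,m) = ⟨n|F|m⟩ of a normal-ordered operator F = Σ_{p,s} C(p,s) (a†)^p a^s and its normal-order coefficients). Then the coefficients are recovered by the inversion formula C(p, s) = Σ_{k=0}^{min(p,s)} (-1)^k q^{k(k-1)/2} / ([k]_q! √([p-k]_q! [s-k]_q!)) · F(p-k, s-k) for all p, s ∈ ℕ. -/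

import Mathlib

open scoped BigOperators

/-- The q-number `[n]_q = (1 - q^n)/(1 - q)`. -/
noncomputable def qnum (q : ℝ) (n : ℕ) : ℝ := (1 - q ^ n) / (1 - q)

/-- The q-factorial `[n]_q! = [1]_q [2]_q ⋯ [n]_q`, with `[0]_q! = 1`. -/
noncomputable def qfact (q : ℝ) : ℕ → ℝ
  | 0 => 1
  | n + 1 => qfact q n * qnum q (n + 1)

/-!
Dividing `F n m` by `√([n]_q! [m]_q!)` turns the hypothesis into a convolution of `C`, along
each diagonal `p - s = const`, with the sequence `1/[k]_q!`. Its inverse under the Cauchy product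
is `(-1)^k q^(k(k-1)/2)/[k]_q!`: this is the identity
`∑_{k ≤ N} (-1)^k q^(k(k-1)/2) [N choose k]_q = 0` for `N ≥ 1`, the q-binomial theorem at `x = -1`.
-/

open Finset

section QFactorial

variable {q : ℝ}

lemma qnum_zero : qnum q 0 = 0 := by simp [qnum]

lemma qfact_succ (n : ℕ) : qfact q (n + 1) = qfact q n * qnum q (n + 1) := rfl

lemma qnum_eq_sum_range_pow (hq : q ≠ 1) (n : ℕ) : qnum q n = ∑ i ∈ range n, q ^ i := by
  rw [qnum, geom_sum_eq hq, ← neg_div_neg_eq, neg_sub, neg_sub]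

lemma qnum_add (hq : q ≠ 1) (a b : ℕ) : qnum q (a + b) = qnum q a + q ^ a * qnum q b := by
  simp only [qnum_eq_sum_range_pow hq, sum_range_add, pow_add, mul_sum]

lemma qnum_pos (hq0 : 0 ≤ q) (hq1 : q ≠ 1) {n : ℕ} (hn : n ≠ 0) : 0 < qnum q n := by
  obtain ⟨m, rfl⟩ := Nat.exists_eq_succ_of_ne_zero hn
  rw [qnum_eq_sum_range_pow hq1, sum_range_succ']
  positivity

lemma qfact_pos (hq0 : 0 ≤ q) (hq1 : q ≠ 1) : ∀ n, 0 < qfact q n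
  | 0 => one_pos
  | n + 1 => mul_pos (qfact_pos hq0 hq1 n) (qnum_pos hq0 hq1 n.succ_ne_zero)

/-- Multiplied by `[n+1]_q = [k]_q + q^k [n+1-k]_q`, the `k`-th term of the sum splits into two
halves, and the first half of term `j+1` cancels the second half of term `j`. -/
theorem sum_range_neg_one_pow_div_qfact_mul_qfact (hq0 : 0 ≤ q) (hq1 : q ≠ 1) (N : ℕ) :
    ∑ k ∈ range (N + 1), (-1) ^ k * q ^ (k * (k - 1) / 2) / (qfact q k * qfact q (N - k)) =
      if N = 0 then 1 else 0 := by
  rcases N with _ | n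
  · simp [qfact]
  have hfact : ∀ j, qfact q j ≠ 0 := fun j => (qfact_pos hq0 hq1 j).ne'
  have hnum : ∀ j, qnum q (j + 1) ≠ 0 := fun j => (qnum_pos hq0 hq1 j.succ_ne_zero).ne'
  let v : ℕ → ℝ := fun j => (-1) ^ j * q ^ (j * (j - 1) / 2) * q ^ j / (qfact q j * qfact q (n - j))
  have hsplit : ∀ k ∈ range (n + 1 + 1),
      qnum q (n + 1) * ((-1) ^ k * q ^ (k * (k - 1) / 2) / (qfact q k * qfact q (n + 1 - k))) =
        (-1) ^ k * q ^ (k * (k - 1) / 2) * qnum q k / (qfact q k * qfact q (n + 1 - k)) +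
        (-1) ^ k * q ^ (k * (k - 1) / 2) * q ^ k * qnum q (n + 1 - k) /
          (qfact q k * qfact q (n + 1 - k)) := by
    intro k hk
    rw [← Nat.add_sub_of_le (mem_range_succ_iff.mp hk), qnum_add hq1, Nat.add_sub_cancel_left]
    ring
  have hfirst : ∑ k ∈ range (n + 1 + 1),
      (-1) ^ k * q ^ (k * (k - 1) / 2) * qnum q k / (qfact q k * qfact q (n + 1 - k)) =
        -∑ j ∈ range (n + 1), v j := by
    rw [sum_range_succ', qnum_zero, mul_zero, zero_div, add_zero, ← sum_neg_distrib]
    refine sum_congr rfl fun j _ => ?_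
    rw [Nat.triangle_succ, Nat.add_sub_add_right, qfact_succ, pow_succ, pow_add]
    simp only [v]
    field_simp [hfact j, hnum j, hfact (n - j)]
  have hsecond : ∑ k ∈ range (n + 1 + 1),
      (-1) ^ k * q ^ (k * (k - 1) / 2) * q ^ k * qnum q (n + 1 - k) /
        (qfact q k * qfact q (n + 1 - k)) = ∑ j ∈ range (n + 1), v j := by
    rw [sum_range_succ, Nat.sub_self, qnum_zero, mul_zero, zero_div, add_zero]
    refine sum_congr rfl fun j hj => ?_
    rw [Nat.sub_add_comm (mem_range_succ_iff.mp hj), qfact_succ]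
    simp only [v]
    field_simp [hfact j, hnum (n - j), hfact (n - j)]
  have hzero : qnum q (n + 1) * ∑ k ∈ range (n + 1 + 1),
      (-1) ^ k * q ^ (k * (k - 1) / 2) / (qfact q k * qfact q (n + 1 - k)) = 0 := by
    rw [mul_sum, sum_congr rfl hsplit, sum_add_distrib, hfirst, hsecond, neg_add_cancel]
  simpa [hnum n] using hzero

end QFactorial

/-- `hab` says that `∑ a k X^k` and `∑ b k X^k` are inverse power series. -/
theorem diagonal_convolution_inversion {R : Type*} [CommSemiring R] (a b : ℕ → R)
    (hab : ∀ N, ∑ k ∈ range (N + 1), a k * b (N - k) = if N = 0 then 1 else 0)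
    (G C : ℕ → ℕ → R)
    (hG : ∀ n m, G n m = ∑ k ∈ range (min n m + 1), b k * C (n - k) (m - k)) (p s : ℕ) :
    C p s = ∑ k ∈ range (min p s + 1), a k * G (p - k) (s - k) := by
  set M := min p s
  symm
  calc ∑ k ∈ range (M + 1), a k * G (p - k) (s - k)
      = ∑ k ∈ range (M + 1), ∑ j ∈ range (M + 1 - k),
          a k * b j * C (p - (k + j)) (s - (k + j)) := by
        refine sum_congr rfl fun k hk => ?_
        have hkM := mem_range_succ_iff.mp hk
        rw [hG, show min (p - k) (s - k) + 1 = M + 1 - k by omega, mul_sum]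
        simp only [Nat.sub_sub, mul_assoc]
    _ = ∑ N ∈ range (M + 1), ∑ k ∈ range (N + 1),
          a k * b (N - k) * C (p - (k + (N - k))) (s - (k + (N - k))) :=
        (sum_range_diag_flip (M + 1) fun k j => a k * b j * C (p - (k + j)) (s - (k + j))).symm
    _ = ∑ N ∈ range (M + 1), (if N = 0 then 1 else 0) * C (p - N) (s - N) := by
        refine sum_congr rfl fun N _ => ?_
        rw [← hab, sum_mul]
        refine sum_congr rfl fun k hk => ?_
        rw [Nat.add_sub_of_le (mem_range_succ_iff.mp hk)]
    _ = C p s := by simp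

/-- if the Fock-space matrix elements `F(n,m)` of a normal-ordered operator
are related to its normal-order coefficients `C(p,s)` by
`F(n,m) = ∑_{k=0}^{min(n,m)} C(n-k, m-k) √([n]_q! [m]_q!)/[k]_q!`, then the coefficients
are recovered by
`C(p,s) = ∑_{k=0}^{min(p,s)} (-1)^k q^{k(k-1)/2}/([k]_q! √([p-k]_q! [s-k]_q!)) F(p-k, s-k)`. -/
theorem normal_order_coefficients_inversion (q : ℝ) (hq0 : 0 < q) (hq1 : q < 1)
    (F C : ℕ → ℕ → ℂ)
    (hFC : ∀ n m : ℕ, F n m = ∑ k ∈ Finset.range (min n m + 1),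
      C (n - k) (m - k) *
        ((Real.sqrt (qfact q n * qfact q m) / qfact q k : ℝ) : ℂ)) :
    ∀ p s : ℕ, C p s = ∑ k ∈ Finset.range (min p s + 1),
      (((-1 : ℝ) ^ k * q ^ (k * (k - 1) / 2) /
          (qfact q k * Real.sqrt (qfact q (p - k) * qfact q (s - k))) : ℝ) : ℂ) *
        F (p - k) (s - k) := by
  intro p s
  have hfact : ∀ n, 0 < qfact q n := qfact_pos hq0.le hq1.ne
  have hnorm : ∀ n m, ((Real.sqrt (qfact q n * qfact q m) : ℝ) : ℂ) ≠ 0 := fun n m =>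
    Complex.ofReal_ne_zero.mpr (Real.sqrt_pos.mpr (mul_pos (hfact n) (hfact m))).ne'
  have hcoef : ∀ k, ((qfact q k : ℝ) : ℂ) ≠ 0 := fun k => Complex.ofReal_ne_zero.mpr (hfact k).ne'
  refine (diagonal_convolution_inversion (R := ℂ)
    (fun k => ((-1 : ℝ) ^ k * q ^ (k * (k - 1) / 2) / qfact q k : ℝ))
    (fun k => ((qfact q k)⁻¹ : ℝ)) (fun N => ?_)
    (fun n m => F n m / ((Real.sqrt (qfact q n * qfact q m) : ℝ) : ℂ)) C (fun n m => ?_) p s).trans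
      (sum_congr rfl fun k _ => ?_)
  · have h := congrArg ((↑) : ℝ → ℂ) (sum_range_neg_one_pow_div_qfact_mul_qfact hq0.le hq1.ne N)
    push_cast [div_eq_mul_inv, mul_inv, ← mul_assoc] at h ⊢
    rw [h]
    split_ifs <;> simp
  · rw [hFC, sum_div]
    refine sum_congr rfl fun k _ => ?_
    push_cast
    field_simp [hnorm n m, hcoef k]
  · push_cast
    field_simp [hnorm (p - k) (s - k), hcoef k]
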